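/- arXiv:2303.13185 — 3 statements merged into one kernel-verified Lean document; each statement's English description precedes it below -/
import Mathlib

section
/- There exists a constant c such that for every natural number n and all natural numbers α, β with α ≥ c·log(n+2), the number of binary strings of length n that are not (α, β)-stochastic is less than 2^{n−β}. (The fraction of non-stochastic strings of length n is less than 2^{−β}.) -/
open scoped Classical

/-- Binary strings: finite sequences over `{0,1}`. -/
abbrev BStr := List Bool

/-- Complexity of `x` with respect to the description method `D`:
the minimal length of a `p` with `D(p) = x`, as an extended natural
(`⊤` if no such `p` exists). -/
noncomputable def Cw (D : BStr →. BStr) (x : BStr) : ℕ∞ :=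
  ⨅ (p : BStr) (_ : x ∈ D p), (p.length : ℕ∞)

/-- A description method is optimal if it is partial computable and gives
complexity at most that of any other partial computable description method,
up to an additive constant. -/
def OptimalDM (D : BStr →. BStr) : Prop :=
  Partrec D ∧ ∀ D' : BStr →. BStr, Partrec D' →
    ∃ c : ℕ, ∀ x : BStr, Cw D x ≤ Cw D' x + (c : ℕ∞)

/-- Plain Kolmogorov complexity (finite value) w.r.t. a description method. -/
noncomputable def C (D : BStr →. BStr) (x : BStr) : ℕ := (Cw D x).toNat

/-- Conditional complexity of `x` given `y` w.r.t. the conditional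
description method `E`. -/
noncomputable def CwCond (E : BStr → BStr →. BStr) (x y : BStr) : ℕ∞ :=
  ⨅ (p : BStr) (_ : x ∈ E p y), (p.length : ℕ∞)

/-- Optimal conditional description method. -/
def OptimalCDM (E : BStr → BStr →. BStr) : Prop :=
  Partrec₂ E ∧ ∀ E' : BStr → BStr →. BStr, Partrec₂ E' →
    ∃ c : ℕ, ∀ x y : BStr, CwCond E x y ≤ CwCond E' x y + (c : ℕ∞)

/-- Conditional Kolmogorov complexity (finite value). -/
noncomputable def Ccond (E : BStr → BStr →. BStr) (x y : BStr) : ℕ :=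
  (CwCond E x y).toNat

/-- `enc` is a computable injective encoding of finite sets of binary strings
as binary strings (computability is expressed on the level of lists of
elements, since every finite set is the set of members of a list). -/
def SetEncoding (enc : Finset BStr → BStr) : Prop :=
  Function.Injective enc ∧ Computable (fun l : List BStr => enc l.toFinset)

/-- A computable step-counting semantics for the description method `D`:
`ev t p` is the output of `D` on program `p` within `t` computation steps
(`none` if the computation has not converged within `t` steps). -/
structure TimedDM (D : BStr →. BStr) where
  ev : ℕ → BStr → Option BStr
  computable : Computable₂ ev
  mono : ∀ {t t' : ℕ} {p y : BStr}, t ≤ t' → ev t p = some y → ev t' p = some y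
  spec : ∀ p y : BStr, y ∈ D p ↔ ∃ t : ℕ, ev t p = some y

/-- Time-bounded complexity `C^t(x)`: the minimal length of a program
producing `x` within `t` steps (`⊤` if there is none). -/
noncomputable def Cwt (ev : ℕ → BStr → Option BStr) (t : ℕ) (x : BStr) : ℕ∞ :=
  ⨅ (p : BStr) (_ : ev t p = some x), (p.length : ℕ∞)

/-- `B D k`: the largest natural number whose binary representation has
complexity at most `k` (naturals are identified with their binary
representations via `Nat.bits`). -/
noncomputable def B (D : BStr →. BStr) (k : ℕ) : ℕ :=
  sSup {m : ℕ | Cw D (Nat.bits m) ≤ (k : ℕ∞)}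

/-- Kolmogorov's `(α,β)`-stochasticity: `x` belongs to a finite set `S` of
complexity at most `α` in which it is random up to `β`. -/
def Stochastic (D : BStr →. BStr) (enc : Finset BStr → BStr)
    (α β : ℕ) (x : BStr) : Prop :=
  ∃ S : Finset BStr, x ∈ S ∧ C D (enc S) ≤ α ∧
    Real.logb 2 S.card - β ≤ (C D x : ℝ)

/-- The binary entropy function (with the convention `H(0) = H(1) = 0`,
which holds automatically since `logb 2 0 = 0` in Mathlib). -/
noncomputable def binH (p : ℝ) : ℝ :=
  -(p * Real.logb 2 p) - (1 - p) * Real.logb 2 (1 - p)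


/-! ### Auxiliary material -/

/-- The list of all binary strings of length `n`. -/
def allB : ℕ → List BStr
  | 0 => [[]]
  | n + 1 => (allB n).map (List.cons false) ++ (allB n).map (List.cons true)

lemma mem_allB : ∀ {n : ℕ} {x : BStr}, x ∈ allB n ↔ x.length = n
  | 0, x => by cases x <;> simp [allB]
  | n + 1, x => by
      cases x with
      | nil => simp [allB]
      | cons b t =>
          cases b <;>
            simp [allB, mem_allB (n := n), List.length_cons, eq_comm (a := t)]

lemma nodup_allB : ∀ n, (allB n).Nodup
  | 0 => by simp [allB]
  | n + 1 => by
      have h := nodup_allB n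
      refine List.Nodup.append (h.map ?_) (h.map ?_) ?_
      · intro a b hab; injection hab
      · intro a b hab; injection hab
      · intro a ha hb
        simp only [List.mem_map] at ha hb
        obtain ⟨u, -, rfl⟩ := ha
        obtain ⟨v, -, hv⟩ := hb
        injection hv with h1 _
        exact Bool.noConfusion h1

lemma length_allB : ∀ n, (allB n).length = 2 ^ n
  | 0 => rfl
  | n + 1 => by
      simp [allB, length_allB n, pow_succ, two_mul]
      ring

lemma flatMap_range_allB_length : ∀ k, ((List.range k).flatMap allB).length = 2 ^ k - 1
  | 0 => rfl
  | k + 1 => by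
      rw [List.range_succ, List.flatMap_append, List.length_append,
        flatMap_range_allB_length k]
      simp [length_allB k]
      have : 1 ≤ 2 ^ k := Nat.one_le_two_pow
      rw [pow_succ]
      omega

/-- Decode a (little-endian) list of bits into a natural number. -/
def natOfBits : List Bool → ℕ := List.foldr Nat.bit 0

lemma natOfBits_bits (n : ℕ) : natOfBits (Nat.bits n) = n := by
  induction n using Nat.binaryRec' with
  | zero => simp [natOfBits]
  | bit b n h ih =>
      rw [Nat.bits_append_bit n b h]
      simpa [natOfBits] using congrArg (Nat.bit b) ih

lemma primrec_natOfBits : Primrec natOfBits := by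
  have hh : Primrec fun q : List Bool × (Bool × ℕ) => Nat.bit q.2.1 q.2.2 := by
    have : Primrec fun q : List Bool × (Bool × ℕ) =>
        2 * q.2.2 + Bool.toNat q.2.1 := by
      refine Primrec.nat_add.comp
        (Primrec.nat_mul.comp (Primrec.const 2) (Primrec.snd.comp Primrec.snd))
        ?_
      exact (Primrec.cond (Primrec.fst.comp Primrec.snd)
        (Primrec.const 1) (Primrec.const 0)).of_eq fun q => by cases q.2.1 <;> rfl
    exact this.of_eq fun q => (Nat.bit_val _ _).symm
  exact (Primrec.list_foldr Primrec.id (Primrec.const 0) hh.to₂).of_eq fun l => rfl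

lemma primrec_allB : Primrec allB := by
  have hstep : Primrec₂ fun (_ : ℕ) (ih : List BStr) =>
      ih.map (List.cons false) ++ ih.map (List.cons true) := by
    have h1 : Primrec fun p : ℕ × List BStr => p.2.map (List.cons false) :=
      Primrec.list_map Primrec.snd
        ((Primrec.list_cons.comp (Primrec.const false) Primrec.snd).to₂)
    have h2 : Primrec fun p : ℕ × List BStr => p.2.map (List.cons true) :=
      Primrec.list_map Primrec.snd
        ((Primrec.list_cons.comp (Primrec.const true) Primrec.snd).to₂)
    exact (Primrec.list_append.comp h1 h2).to₂
  exact (Primrec.nat_rec₁ ([[]] : List BStr) hstep).of_eq fun n => by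
    induction n with
    | zero => rfl
    | succ n ih => simp only [allB, ← ih]

lemma Cw_le_of_mem {D : BStr →. BStr} {x p : BStr} (h : x ∈ D p) :
    Cw D x ≤ (p.length : ℕ∞) := by
  refine iInf_le_of_le p ?_
  exact iInf_le _ h

lemma exists_prog {D : BStr →. BStr} {x : BStr} {k : ℕ}
    (h : Cw D x < (k : ℕ∞) + 1) : ∃ p, x ∈ D p ∧ p.length ≤ k := by
  rw [Cw] at h
  obtain ⟨p, hp⟩ := iInf_lt_iff.1 h
  obtain ⟨hm, hl⟩ := iInf_lt_iff.1 hp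
  refine ⟨p, hm, ?_⟩
  have : (p.length : ℕ∞) < ((k + 1 : ℕ) : ℕ∞) := by
    simpa [Nat.cast_add] using hl
  exact Nat.lt_succ_iff.1 (by exact_mod_cast this)

/-- The number of non-`(α,β)`-stochastic strings of length `n` is less than
`2^{n-β}` as soon as `α ≥ c·log(n+2)`. -/
theorem stmt6 (D : BStr →. BStr) (hD : OptimalDM D)
    (enc : Finset BStr → BStr) (henc : SetEncoding enc) :
    ∃ c : ℝ, ∀ n α β : ℕ,
      c * Real.logb 2 ((n : ℝ) + 2) ≤ (α : ℝ) →
      (({x : BStr | x.length = n ∧ ¬ Stochastic D enc α β x}.ncard : ℝ))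
        < (2 : ℝ) ^ ((n : ℤ) - (β : ℤ)) := by
  classical
  obtain ⟨hDp, hopt⟩ := hD
  -- bound via the identity description method: every string has finite complexity
  obtain ⟨c0, hc0⟩ := hopt (fun p => Part.some p)
    ((Computable.id (α := BStr)).partrec.of_eq (fun p => rfl))
  have hfin : ∀ x : BStr, Cw D x ≠ ⊤ := by
    intro x
    have h1 : Cw (fun p => Part.some p) x ≤ (x.length : ℕ∞) :=
      Cw_le_of_mem (Part.mem_some x)
    have h2 : Cw D x ≤ (x.length : ℕ∞) + (c0 : ℕ∞) :=
      (hc0 x).trans (by gcongr)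
    intro htop
    rw [htop] at h2
    have h3 : (x.length : ℕ∞) + (c0 : ℕ∞) = ⊤ := top_le_iff.1 h2
    rw [← Nat.cast_add] at h3
    exact ENat.coe_ne_top _ h3
  have hCeq : ∀ x : BStr, ((C D x : ℕ) : ℕ∞) = Cw D x := fun x =>
    ENat.coe_toNat (hfin x)
  -- the description method computing the set of all strings of a given length
  set D2 : BStr →. BStr :=
    fun p => Part.some (enc (allB (natOfBits p)).toFinset) with hD2def
  have hD2p : Partrec D2 := by
    have hcomp : Computable fun p : BStr => enc (allB (natOfBits p)).toFinset :=
      henc.2.comp (primrec_allB.comp primrec_natOfBits).to_comp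
    exact hcomp.partrec.of_eq fun p => rfl
  obtain ⟨c1, hc1⟩ := hopt D2 hD2p
  refine ⟨(c1 : ℝ) + 2, ?_⟩
  intro n α β hα
  set L : ℝ := Real.logb 2 ((n : ℝ) + 2) with hL
  have hL1 : 1 ≤ L := by
    rw [hL, show (1 : ℝ) = Real.logb 2 2 from (Real.logb_self_eq_one one_lt_two).symm]
    rw [Real.logb_le_logb one_lt_two (by norm_num) (by positivity)]
    have : (0 : ℝ) ≤ n := Nat.cast_nonneg n
    linarith
  -- length of the binary representation of n
  have hbits : ((Nat.bits n).length : ℝ) ≤ 2 * L := by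
    rw [Nat.size_eq_bits_len]
    have h1 : n.size ≤ Nat.log 2 n + 1 :=
      Nat.size_le.2 (Nat.lt_pow_succ_log_self (by norm_num) n)
    have h2 : (Nat.log 2 n : ℝ) ≤ L := by
      have hpow : ((2 : ℕ) ^ Nat.log 2 n : ℝ) ≤ (n : ℝ) + 2 := by
        rcases Nat.eq_zero_or_pos n with rfl | hn
        · simp
        · have h := Nat.pow_log_le_self 2 hn.ne' 
          have : ((2 : ℕ) ^ Nat.log 2 n : ℝ) ≤ (n : ℝ) := by exact_mod_cast h
          linarith
      have hlogpow : Real.logb 2 (((2 : ℕ) : ℝ) ^ Nat.log 2 n) = Nat.log 2 n := by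
        rw [Real.logb_pow]
        simp [Real.logb_self_eq_one one_lt_two]
      calc (Nat.log 2 n : ℝ) = Real.logb 2 (((2 : ℕ) : ℝ) ^ Nat.log 2 n) :=
            hlogpow.symm
        _ ≤ L := by
            rw [Real.logb_le_logb one_lt_two (by positivity) (by positivity)]
            exact_mod_cast hpow
    have h1' : (n.size : ℝ) ≤ (Nat.log 2 n : ℝ) + 1 := by exact_mod_cast h1
    linarith
  -- the set S of all strings of length n has complexity at most α
  have hα' : (Nat.bits n).length + c1 ≤ α := by
    have hc1' : (0 : ℝ) ≤ (c1 : ℝ) := Nat.cast_nonneg c1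
    have : ((Nat.bits n).length : ℝ) + (c1 : ℝ) ≤ (α : ℝ) := by nlinarith
    exact_mod_cast this
  set S : Finset BStr := (allB n).toFinset with hSdef
  have hmemS : ∀ x : BStr, x ∈ S ↔ x.length = n := by
    intro x; rw [hSdef, List.mem_toFinset, mem_allB]
  have hcardS : S.card = 2 ^ n := by
    rw [hSdef, List.toFinset_card_of_nodup (nodup_allB n), length_allB]
  have hCS : C D (enc S) ≤ α := by
    have hmem : enc S ∈ D2 (Nat.bits n) := by
      rw [hD2def]
      simp only [natOfBits_bits]
      exact Part.mem_some _
    have h1 : Cw D2 (enc S) ≤ ((Nat.bits n).length : ℕ∞) := Cw_le_of_mem hmem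
    have h2 : Cw D (enc S) ≤ ((α : ℕ) : ℕ∞) := by
      refine (hc1 (enc S)).trans ?_
      calc Cw D2 (enc S) + (c1 : ℕ∞) ≤ ((Nat.bits n).length : ℕ∞) + (c1 : ℕ∞) :=
            by gcongr
        _ = (((Nat.bits n).length + c1 : ℕ) : ℕ∞) := by push_cast; ring
        _ ≤ ((α : ℕ) : ℕ∞) := by exact_mod_cast hα'
    have := (hCeq (enc S)) ▸ h2
    exact_mod_cast this
  -- any non-stochastic string of length n has complexity < n - β
  have hbad : ∀ x : BStr, x.length = n → ¬ Stochastic D enc α β x →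
      (C D x : ℝ) < (n : ℝ) - (β : ℝ) := by
    intro x hx hns
    by_contra hcon
    push_neg at hcon
    refine hns ⟨S, (hmemS x).2 hx, hCS, ?_⟩
    have : Real.logb 2 (S.card : ℝ) = n := by
      rw [hcardS]
      push_cast
      rw [Real.logb_pow]
      simp [Real.logb_self_eq_one one_lt_two]
    rw [this]
    linarith
  set Bad : Set BStr := {x : BStr | x.length = n ∧ ¬ Stochastic D enc α β x}
    with hBad
  by_cases hnβ : n ≤ β
  · -- Bad is empty
    have : Bad = ∅ := by
      rw [hBad]
      ext x
      simp only [Set.mem_setOf_eq, Set.mem_empty_iff_false, iff_false, not_and]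
      intro hx hns
      have h := hbad x hx hns
      have : (n : ℝ) - (β : ℝ) ≤ 0 := by
        have : (n : ℝ) ≤ (β : ℝ) := by exact_mod_cast hnβ
        linarith
      have h0 : (0 : ℝ) ≤ (C D x : ℝ) := Nat.cast_nonneg _
      linarith
    rw [this]
    simp only [Set.ncard_empty, Nat.cast_zero]
    positivity
  · push_neg at hnβ
    set m : ℕ := n - β - 1 with hm
    have hm1 : n - β = m + 1 := by omega
    have hprog : ∀ x ∈ Bad, ∃ p, x ∈ D p ∧ p.length ≤ m := by
      intro x hxB
      obtain ⟨hx, hns⟩ := hxB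
      have h := hbad x hx hns
      have hnat : C D x < n - β := by
        have : ((n - β : ℕ) : ℝ) = (n : ℝ) - (β : ℝ) := by
          push_cast [Nat.cast_sub hnβ.le]; ring
        have : (C D x : ℝ) < ((n - β : ℕ) : ℝ) := by rw [this]; exact h
        exact_mod_cast this
      have hCm : C D x ≤ m := by omega
      have hlt : Cw D x < (m : ℕ∞) + 1 := by
        rw [← hCeq x]
        have h1 : ((C D x : ℕ) : ℕ∞) ≤ (m : ℕ∞) := by exact_mod_cast hCm
        have h2 : (m : ℕ∞) < (m : ℕ∞) + 1 :=
          (ENat.lt_add_one_iff (ENat.coe_ne_top m)).2 le_rfl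
        exact lt_of_le_of_lt h1 h2
      exact exists_prog hlt
    set f : BStr → BStr := fun x =>
      if h : ∃ p, x ∈ D p ∧ p.length ≤ m then h.choose else [] with hf
    set T : Finset BStr := ((List.range (m + 1)).flatMap allB).toFinset with hT
    have hmaps : ∀ x ∈ Bad, f x ∈ (↑T : Set BStr) := by
      intro x hx
      obtain ⟨p, hp, hpl⟩ := hprog x hx
      have hex : ∃ p, x ∈ D p ∧ p.length ≤ m := ⟨p, hp, hpl⟩
      have hspec := hex.choose_spec
      rw [hf]
      simp only [hex, dif_pos]
      rw [Finset.mem_coe, hT, List.mem_toFinset, List.mem_flatMap]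
      have hlen := hspec.2
      refine ⟨hex.choose.length, ?_, mem_allB.2 rfl⟩
      rw [List.mem_range]
      omega
    have hinj : Set.InjOn f Bad := by
      intro x hx y hy hxy
      obtain ⟨p, hp, hpl⟩ := hprog x hx
      obtain ⟨q, hq, hql⟩ := hprog y hy
      have hex : ∃ p, x ∈ D p ∧ p.length ≤ m := ⟨p, hp, hpl⟩
      have hey : ∃ p, y ∈ D p ∧ p.length ≤ m := ⟨q, hq, hql⟩
      have h1 : x ∈ D (f x) := by rw [hf]; simp only [hex, dif_pos]; exact hex.choose_spec.1
      have h2 : y ∈ D (f y) := by rw [hf]; simp only [hey, dif_pos]; exact hey.choose_spec.1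
      rw [hxy] at h1
      exact Part.mem_unique h1 h2
    have hcount : Bad.ncard ≤ T.card := by
      have := Set.ncard_le_ncard_of_injOn f hmaps hinj (T.finite_toSet)
      rwa [Set.ncard_coe_finset] at this
    have hTcard : T.card ≤ 2 ^ (m + 1) - 1 := by
      rw [hT]
      calc ((List.range (m + 1)).flatMap allB).toFinset.card
          ≤ ((List.range (m + 1)).flatMap allB).length := List.toFinset_card_le _
        _ = 2 ^ (m + 1) - 1 := flatMap_range_allB_length (m + 1)
    have h2pow : (1 : ℕ) ≤ 2 ^ (m + 1) := Nat.one_le_two_pow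
    have hreal : (Bad.ncard : ℝ) < (2 : ℝ) ^ (m + 1) := by
      have h1 : (Bad.ncard : ℝ) ≤ ((2 ^ (m + 1) - 1 : ℕ) : ℝ) := by
        exact_mod_cast hcount.trans hTcard
      have h2 : ((2 ^ (m + 1) - 1 : ℕ) : ℝ) = (2 : ℝ) ^ (m + 1) - 1 := by
        push_cast [Nat.cast_sub h2pow]
        ring
      rw [h2] at h1
      linarith
    have hexp : (2 : ℝ) ^ ((n : ℤ) - (β : ℤ)) = (2 : ℝ) ^ (m + 1) := by
      have : (n : ℤ) - (β : ℤ) = ((m + 1 : ℕ) : ℤ) := by omega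
      rw [this, zpow_natCast]
    rw [hexp]
    exact hreal
end

section
/- For every total computable function t : ℕ → ℕ there exists a constant c such that for every natural number n there exists a binary string x of length n with C^{t(n)}(x) ≥ n and C(x) ≤ c·log(n+2). (Kolmogorov's 1965 remark: there are objects of very small complexity that cannot be restored from short programs within any prescribed computable time bound.) -/
open scoped Classical

/-! ### Auxiliary machinery for `stmt8` -/

section Stmt8Aux

open Computable

/-- Computable `List.map` with a computable (binary) function. -/
theorem computable_list_map {α β σ : Type*} [Primcodable α] [Primcodable β] [Primcodable σ]
    {f : α → List β} {g : α → β → σ} (hf : Computable f) (hg : Computable₂ g) :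
    Computable fun a => (f a).map (g a) := by
  have key : ∀ (l : List β) (G : β → σ) (k : ℕ),
      (Nat.rec [] (fun y IH => IH ++ ((l[y]?).map G).toList) k : List σ)
        = (l.take k).map G := by
    intro l G k
    induction k with
    | zero => simp
    | succ k ih =>
      show (Nat.rec [] (fun y IH => IH ++ ((l[y]?).map G).toList) k : List σ)
          ++ ((l[k]?).map G).toList = _
      rw [ih, List.take_succ, List.map_append]
      congr 1
      cases h : l[k]? <;> simp [h]
  have hget : Computable fun q : α × (ℕ × List σ) => (f q.1)[q.2.1]? :=
    Computable.list_getElem?.comp (hf.comp Computable.fst) (Computable.fst.comp Computable.snd)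
  have hg' : Computable₂ fun (q : α × (ℕ × List σ)) (b : β) => g q.1 b :=
    hg.comp (Computable.fst.comp Computable.fst) Computable.snd
  have htl : Computable fun q : α × (ℕ × List σ) => (((f q.1)[q.2.1]?).map (g q.1)).toList :=
    Primrec.optionToList.to_comp.comp (Computable.option_map hget hg')
  have hh : Computable₂ fun (a : α) (p : ℕ × List σ) =>
      p.2 ++ (((f a)[p.1]?).map (g a)).toList :=
    Computable.list_append.comp (Computable.snd.comp Computable.snd) htl
  have := Computable.nat_rec (Computable.list_length.comp hf)
    (Computable.const ([] : List σ)) hh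
  refine this.of_eq fun a => ?_
  rw [key (f a) (g a) (f a).length, List.take_length]

/-- Computable `List.filterMap` with a computable (binary) function. -/
theorem computable_list_filterMap {α β σ : Type*} [Primcodable α] [Primcodable β] [Primcodable σ]
    {f : α → List β} {g : α → β → Option σ} (hf : Computable f) (hg : Computable₂ g) :
    Computable fun a => (f a).filterMap (g a) := by
  have key : ∀ (l : List β) (G : β → Option σ),
      (l.map fun b => (G b).toList).flatten = l.filterMap G := by
    intro l G
    induction l with
    | nil => simp
    | cons b l ih =>
      rw [List.map_cons, List.flatten_cons, ih, List.filterMap_cons]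
      cases h : G b <;> simp [h]
  have : Computable fun a => ((f a).map fun b => (g a b).toList).flatten :=
    Primrec.list_flatten.to_comp.comp
      (computable_list_map hf (Primrec.optionToList.to_comp.comp₂ hg))
  exact this.of_eq fun a => key (f a) (g a)

/-- The list of all binary strings of length `n`. -/
def strs : ℕ → List BStr :=
  fun n => Nat.rec [[]] (fun _ ih => ih.map (List.cons false) ++ ih.map (List.cons true)) n

@[simp] lemma strs_zero : strs 0 = [[]] := rfl

@[simp] lemma strs_succ (n : ℕ) :
    strs (n + 1) = (strs n).map (List.cons false) ++ (strs n).map (List.cons true) := rfl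

lemma mem_strs {n : ℕ} {x : BStr} : x ∈ strs n ↔ x.length = n := by
  induction n generalizing x with
  | zero => simp [strs, List.length_eq_zero_iff]
  | succ n ih =>
    simp only [strs_succ, List.mem_append, List.mem_map]
    constructor
    · rintro (⟨y, hy, rfl⟩ | ⟨y, hy, rfl⟩) <;> simp [ih.1 hy]
    · intro h
      cases x with
      | nil => simp at h
      | cons b y =>
        have hy : y.length = n := by simpa using h
        cases b
        · exact Or.inl ⟨y, ih.2 hy, rfl⟩
        · exact Or.inr ⟨y, ih.2 hy, rfl⟩

lemma strs_nodup (n : ℕ) : (strs n).Nodup := by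
  induction n with
  | zero => simp
  | succ n ih =>
    rw [strs_succ]
    refine List.Nodup.append (ih.map ?_) (ih.map ?_) ?_
    · intro a b hab; simpa using hab
    · intro a b hab; simpa using hab
    · intro a ha hb
      rcases List.mem_map.1 ha with ⟨y, _, rfl⟩
      rcases List.mem_map.1 hb with ⟨z, _, h⟩
      simp at h

lemma strs_length (n : ℕ) : (strs n).length = 2 ^ n := by
  induction n with
  | zero => simp
  | succ n ih => simp [strs_succ, ih, pow_succ, Nat.mul_comm, Nat.two_mul]

lemma strs_computable : Computable strs := by
  have hl : Primrec fun q : ℕ × (ℕ × List BStr) => q.2.2 := Primrec.snd.comp Primrec.snd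
  have hmf : Primrec fun q : ℕ × (ℕ × List BStr) => q.2.2.map (List.cons false) :=
    Primrec.list_map hl ((Primrec.list_cons (α := Bool)).comp₂
      (Primrec₂.const false) Primrec₂.right)
  have hmt : Primrec fun q : ℕ × (ℕ × List BStr) => q.2.2.map (List.cons true) :=
    Primrec.list_map hl ((Primrec.list_cons (α := Bool)).comp₂
      (Primrec₂.const true) Primrec₂.right)
  have hstep : Computable₂ fun (_ : ℕ) (p : ℕ × List BStr) =>
      p.2.map (List.cons false) ++ p.2.map (List.cons true) :=
    (Primrec.list_append.comp hmf hmt).to_comp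
  exact (Computable.nat_rec Computable.id (Computable.const [[]]) hstep).of_eq fun n => by
    induction n with
    | zero => rfl
    | succ n ih =>
      rw [strs_succ, ← ih]
      rfl

/-- The list of all binary strings of length `< n`. -/
def progs (n : ℕ) : List BStr := ((List.range n).map strs).flatten

lemma mem_progs {n : ℕ} {p : BStr} : p ∈ progs n ↔ p.length < n := by
  simp only [progs, List.mem_flatten, List.mem_map]
  constructor
  · rintro ⟨l, ⟨k, hk, rfl⟩, hp⟩
    rw [mem_strs.1 hp]
    exact List.mem_range.1 hk
  · intro h
    exact ⟨strs p.length, ⟨p.length, by simpa using h, rfl⟩, mem_strs.2 rfl⟩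

lemma progs_length (n : ℕ) : (progs n).length = 2 ^ n - 1 := by
  induction n with
  | zero => simp [progs]
  | succ n ih =>
    have h1 : (1 : ℕ) ≤ 2 ^ n := Nat.one_le_two_pow
    have : progs (n + 1) = progs n ++ strs n := by
      simp [progs, List.range_succ]
    rw [this, List.length_append, ih, strs_length]
    rw [pow_succ]
    omega

lemma progs_computable : Computable progs :=
  Primrec.list_flatten.to_comp.comp
    (computable_list_map Primrec.list_range.to_comp (strs_computable.comp Computable.snd))

/-- Strings producible within the time bound by programs of length `< n`. -/
def badL (ev : ℕ → BStr → Option BStr) (t : ℕ → ℕ) (n : ℕ) : List BStr :=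
  (progs n).filterMap (ev (t n))

lemma badL_computable {ev : ℕ → BStr → Option BStr} {t : ℕ → ℕ}
    (hev : Computable₂ ev) (ht : Computable t) : Computable (badL ev t) :=
  computable_list_filterMap progs_computable
    (hev.comp (ht.comp Computable.fst) Computable.snd)

/-- Strings of length `n` not producible quickly by short programs. -/
def goodL (ev : ℕ → BStr → Option BStr) (t : ℕ → ℕ) (n : ℕ) : List BStr :=
  (strs n).filter (fun s => decide (s ∉ badL ev t n))

lemma goodL_computable {ev : ℕ → BStr → Option BStr} {t : ℕ → ℕ}
    (hev : Computable₂ ev) (ht : Computable t) : Computable (goodL ev t) := by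
  have hbad := badL_computable hev ht
  have hidx : Computable fun q : ℕ × BStr =>
      @List.idxOf BStr instBEqOfDecidableEq q.2 (badL ev t q.1) :=
    Primrec.list_idxOf.to_comp.comp Computable.snd (hbad.comp Computable.fst)
  have hlen : Computable fun q : ℕ × BStr => (badL ev t q.1).length :=
    Computable.list_length.comp (hbad.comp Computable.fst)
  have hc : Computable fun q : ℕ × BStr =>
      decide (@List.idxOf BStr instBEqOfDecidableEq q.2 (badL ev t q.1)
        < (badL ev t q.1).length) :=
    Primrec.nat_lt.decide.to_comp.comp hidx hlen
  have hg2 : Computable₂ fun (n : ℕ) (s : BStr) =>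
      if s ∈ badL ev t n then (none : Option BStr) else some s := by
    refine (Computable.cond hc (Computable.const none)
      (Computable.option_some.comp Computable.snd)).of_eq fun q => ?_
    by_cases h : q.2 ∈ badL ev t q.1
    · have hlt : @List.idxOf BStr instBEqOfDecidableEq q.2 (badL ev t q.1)
          < (badL ev t q.1).length := (@List.idxOf_lt_length_iff _ instBEqOfDecidableEq _ _ _).2 h
      simp [h, hlt]
    · have hlt : ¬ @List.idxOf BStr instBEqOfDecidableEq q.2 (badL ev t q.1)
          < (badL ev t q.1).length := by
        simpa [List.idxOf_lt_length_iff] using h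
      simp [h, hlt]
  refine (computable_list_filterMap strs_computable hg2).of_eq fun n => ?_
  show (strs n).filterMap _ = (strs n).filter _
  induction strs n with
  | nil => simp
  | cons b l ih =>
    rw [List.filterMap_cons, List.filter_cons]
    by_cases h : b ∈ badL ev t n <;> simp [h, ih]

/-- The selected string of length `n`. -/
def xstr (ev : ℕ → BStr → Option BStr) (t : ℕ → ℕ) (n : ℕ) : BStr :=
  (goodL ev t n).headI

lemma xstr_computable {ev : ℕ → BStr → Option BStr} {t : ℕ → ℕ}
    (hev : Computable₂ ev) (ht : Computable t) : Computable (xstr ev t) :=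
  Primrec.list_headI.to_comp.comp (goodL_computable hev ht)

lemma goodL_ne_nil (ev : ℕ → BStr → Option BStr) (t : ℕ → ℕ) (n : ℕ) :
    goodL ev t n ≠ [] := by
  intro h
  have hall : ∀ s ∈ strs n, s ∈ badL ev t n := by
    intro s hs
    by_contra hns
    have : s ∈ goodL ev t n := List.mem_filter.2 ⟨hs, by simpa using hns⟩
    rw [h] at this
    simp at this
  have hsub : (strs n).toFinset ⊆ (badL ev t n).toFinset := by
    intro s hs
    rw [List.mem_toFinset] at *
    exact hall s hs
  have h1 : (strs n).toFinset.card = 2 ^ n := by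
    rw [List.toFinset_card_of_nodup (strs_nodup n), strs_length]
  have h2 : (badL ev t n).toFinset.card ≤ 2 ^ n - 1 := by
    refine le_trans (List.toFinset_card_le _) ?_
    rw [badL, ← progs_length n]
    exact List.length_filterMap_le _ _
  have h3 := Finset.card_le_card hsub
  have hpow : (1 : ℕ) ≤ 2 ^ n := Nat.one_le_two_pow
  omega

lemma xstr_mem (ev : ℕ → BStr → Option BStr) (t : ℕ → ℕ) (n : ℕ) :
    xstr ev t n ∈ goodL ev t n := by
  have h := goodL_ne_nil ev t n
  rcases hg : goodL ev t n with _ | ⟨a, l⟩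
  · exact absurd hg h
  · simp [xstr, hg]

lemma xstr_length (ev : ℕ → BStr → Option BStr) (t : ℕ → ℕ) (n : ℕ) :
    (xstr ev t n).length = n :=
  mem_strs.1 (List.mem_filter.1 (xstr_mem ev t n)).1

lemma xstr_not_bad (ev : ℕ → BStr → Option BStr) (t : ℕ → ℕ) (n : ℕ) :
    xstr ev t n ∉ badL ev t n := by
  have h := (List.mem_filter.1 (xstr_mem ev t n)).2
  simpa using h

/-- Decoding a binary string back to a natural number (inverse of `Nat.bits`). -/
def decStr : BStr → ℕ := fun p => p.foldr (fun b m => 2 * m + cond b 1 0) 0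

lemma decStr_primrec : Primrec decStr := by
  have hstep : Primrec fun r : BStr × (Bool × ℕ) => 2 * r.2.2 + cond r.2.1 1 0 :=
    Primrec.nat_add.comp
      (Primrec.nat_mul.comp (Primrec.const 2) (Primrec.snd.comp Primrec.snd))
      (Primrec.cond (Primrec.fst.comp Primrec.snd) (Primrec.const 1) (Primrec.const 0))
  exact Primrec.list_foldr Primrec.id (Primrec.const 0) hstep.to₂

lemma decStr_bits (n : ℕ) : decStr (Nat.bits n) = n := by
  induction n using Nat.binaryRec' with
  | zero => simp [decStr]
  | bit b n hn ih =>
    rw [Nat.bits_append_bit n b hn]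
    show 2 * decStr (Nat.bits n) + cond b 1 0 = Nat.bit b n
    rw [ih, Nat.bit_val]
    cases b <;> rfl

end Stmt8Aux

/-- **Kolmogorov's 1965 remark**: there are objects of very small complexity
that cannot be restored from short programs within any prescribed computable
time bound. (`C^{t(n)}(x) ≥ n` is expressed by saying that every program
producing `x` within `t(n)` steps has length at least `n`.) -/
theorem stmt8 (D : BStr →. BStr) (hD : OptimalDM D) (T : TimedDM D)
    (t : ℕ → ℕ) (ht : Computable t) :
    ∃ c : ℝ, ∀ n : ℕ, ∃ x : BStr, x.length = n ∧
      (∀ p : BStr, T.ev (t n) p = some x → n ≤ p.length) ∧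
      (C D x : ℝ) ≤ c * Real.logb 2 ((n : ℝ) + 2) := by
  obtain ⟨-, hopt⟩ := hD
  have hev := T.computable
  set F : BStr → BStr := fun p => xstr T.ev t (decStr p) with hFdef
  have hF : Computable F := (xstr_computable hev ht).comp decStr_primrec.to_comp
  have hD' : Partrec (fun p : BStr => (Part.some (F p) : Part BStr)) :=
    hF.partrec.of_eq fun p => rfl
  obtain ⟨c, hc⟩ := hopt _ hD'
  refine ⟨(c : ℝ) + 2, fun n => ?_⟩
  refine ⟨xstr T.ev t n, xstr_length _ _ _, ?_, ?_⟩
  · intro p hp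
    by_contra hlt
    push_neg at hlt
    exact xstr_not_bad T.ev t n (List.mem_filterMap.2 ⟨p, mem_progs.2 hlt, hp⟩)
  · have hmem : xstr T.ev t n ∈ (Part.some (F (Nat.bits n)) : Part BStr) := by
      rw [hFdef]
      simp [decStr_bits]
    have h1 : Cw (fun p => Part.some (F p)) (xstr T.ev t n) ≤ ((Nat.bits n).length : ℕ∞) := by
      unfold Cw
      exact iInf_le_of_le (Nat.bits n) (iInf_le_of_le hmem le_rfl)
    have h2 : Cw D (xstr T.ev t n) ≤ ((Nat.size n + c : ℕ) : ℕ∞) := by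
      refine le_trans (hc _) (le_trans (add_le_add_left h1 _) ?_)
      rw [Nat.size_eq_bits_len, Nat.cast_add]
    have h3 : C D (xstr T.ev t n) ≤ Nat.size n + c := ENat.toNat_le_of_le_coe h2
    set L := Real.logb 2 ((n : ℝ) + 2) with hLdef
    have hn0 : (0 : ℝ) ≤ (n : ℝ) := Nat.cast_nonneg n
    have hL1 : (1 : ℝ) ≤ L := by
      rw [hLdef, show (1 : ℝ) = Real.logb 2 2 from (Real.logb_self_eq_one (by norm_num)).symm]
      exact Real.logb_le_logb_of_le (by norm_num) (by norm_num) (by linarith)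
    have hsz : (Nat.size n : ℝ) ≤ 1 + L := by
      rcases Nat.eq_zero_or_pos n with h0 | h0
      · subst h0
        simp
        linarith
      · have hs1 : 1 ≤ Nat.size n := Nat.size_pos.2 h0
        have h4 : 2 ^ (Nat.size n - 1) ≤ n := Nat.lt_size.1 (by omega)
        have h5 : (2 : ℝ) ^ (Nat.size n - 1) ≤ (n : ℝ) + 2 := by
          have h4' := (Nat.cast_le (α := ℝ)).2 h4
          push_cast at h4'
          linarith
        have h6 : ((Nat.size n - 1 : ℕ) : ℝ) ≤ L := by
          have heq : ((Nat.size n - 1 : ℕ) : ℝ)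
              = Real.logb 2 ((2 : ℝ) ^ (Nat.size n - 1 : ℕ)) := by
            rw [Real.logb_pow, Real.logb_self_eq_one (by norm_num)]
            ring
          rw [hLdef, heq]
          exact Real.logb_le_logb_of_le (by norm_num) (by positivity) h5
        have h7 : ((Nat.size n - 1 : ℕ) : ℝ) = (Nat.size n : ℝ) - 1 := by
          push_cast [hs1]
          ring
        linarith
    have hc0 : (0 : ℝ) ≤ (c : ℝ) := Nat.cast_nonneg c
    have hfin : (C D (xstr T.ev t n) : ℝ) ≤ (Nat.size n : ℝ) + c := by exact_mod_cast h3
    nlinarith [mul_nonneg hc0 (sub_nonneg.2 hL1)]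
end

section
/- There exists a constant c such that for every natural number n, every subset A of {1,…,n} with 0 < |A| < n, and every binary string x of length n the following holds: writing n₁ = |A|, n₂ = n − n₁, m₁ for the number of positions i ∈ A with x_i = 1, and m₂ for the number of positions i ∉ A with x_i = 1, one has C(x) ≤ n₁·H(m₁/n₁) + n₂·H(m₂/n₂) + C(χ_A) + c·log(n+2), where χ_A is the characteristic binary string of A of length n. (Kolmogorov's 1982 seminar bound underlying frequency stability of stochastic sequences under simple selections.) -/
open scoped Classical

/-- value of a little-endian bit list -/
def fromBits (l : List Bool) : ℕ := l.foldr (fun b m => 2 * m + cond b 1 0) 0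

theorem fromBits_bits (n : ℕ) : fromBits (Nat.bits n) = n := by
  induction n using Nat.binaryRec' with
  | zero => simp [fromBits, Nat.zero_bits]
  | bit b n h ih =>
    rw [Nat.bits_append_bit n b (by intro h0; rcases h h0 with rfl; rfl)]
    simp [fromBits, List.foldr_cons] at ih ⊢
    rw [ih, Nat.bit_val]
    cases b <;> simp

/-- number of positions where both lists (padded with `false`) are `true`,
restricted to the length of the first list -/
def c1 (χ y : List Bool) : ℕ :=
  (List.range χ.length).countP (fun i => χ.getD i false && y.getD i false)

theorem c1_nil (y : List Bool) : c1 [] y = 0 := rfl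

theorem c1_cons (c : Bool) (χ : List Bool) (b : Bool) (y : List Bool) :
    c1 (c :: χ) (b :: y) = (cond (c && b) 1 0) + c1 χ y := by
  simp only [c1, List.length_cons, List.range_succ_eq_map, List.countP_cons, List.countP_map]
  simp only [Function.comp_def, List.getD_cons_succ, List.getD_cons_zero]
  cases c <;> cases b <;> simp [Nat.add_comm]

/-- all binary strings of length `n` -/
def allStr : ℕ → List (List Bool) :=
  fun n => Nat.rec [([] : List Bool)]
    (fun _ ih => ih.map (List.cons false) ++ ih.map (List.cons true)) n

theorem allStr_zero : allStr 0 = [[]] := rfl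
theorem allStr_succ (n : ℕ) :
    allStr (n + 1) = (allStr n).map (List.cons false) ++ (allStr n).map (List.cons true) := rfl

theorem mem_allStr (y : List Bool) (n : ℕ) : y ∈ allStr n ↔ y.length = n := by
  induction n generalizing y with
  | zero => cases y <;> simp [allStr_zero]
  | succ n ih => cases y with
    | nil => simp [allStr_succ]
    | cons b t => cases b <;> simp [allStr_succ, ih]

theorem allStr_nodup (n : ℕ) : (allStr n).Nodup := by
  induction n with
  | zero => simp [allStr_zero]
  | succ n ih =>
    rw [allStr_succ]
    refine List.Nodup.append (ih.map (fun a b => by simp)) (ih.map (fun a b => by simp)) ?_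
    intro y h1 h2
    simp only [List.mem_map] at h1 h2
    obtain ⟨a, _, rfl⟩ := h1
    obtain ⟨b, _, hb⟩ := h2
    simp at hb

/-- select entries of `y` at positions where `χ` is `true` -/
def sel : List Bool → List Bool → List Bool
  | [], _ => []
  | _ :: _, [] => []
  | c :: χ, b :: y => if c then b :: sel χ y else sel χ y

theorem sel_length (χ y : List Bool) (h : y.length = χ.length) :
    (sel χ y).length = c1 χ χ := by
  induction χ generalizing y with
  | nil => simp [sel, c1_nil]
  | cons c χ ih =>
    cases y with
    | nil => simp at h
    | cons b t =>
      simp only [List.length_cons, Nat.add_right_cancel_iff] at h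
      rw [c1_cons]
      cases c <;> simp [sel, ih t h, Nat.add_comm]

theorem sel_countP (χ y : List Bool) (h : y.length = χ.length) :
    (sel χ y).countP (fun b => b) = c1 χ y := by
  induction χ generalizing y with
  | nil => simp [sel, c1_nil]
  | cons c χ ih =>
    cases y with
    | nil => simp at h
    | cons b t =>
      simp only [List.length_cons, Nat.add_right_cancel_iff] at h
      rw [c1_cons]
      cases c <;> cases b <;> simp [sel, List.countP_cons, ih t h, Nat.add_comm]

theorem sel_inj (χ y y' : List Bool) (hy : y.length = χ.length) (hy' : y'.length = χ.length)
    (h1 : sel χ y = sel χ y') (h2 : sel (χ.map not) y = sel (χ.map not) y') : y = y' := by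
  induction χ generalizing y y' with
  | nil =>
    cases y <;> cases y' <;> simp_all
  | cons c χ ih =>
    cases y with
    | nil => simp at hy
    | cons b t =>
      cases y' with
      | nil => simp at hy'
      | cons b' t' =>
        simp only [List.length_cons, Nat.add_right_cancel_iff] at hy hy'
        cases c
        · simp only [sel, List.map_cons, Bool.not_false, if_false, if_true] at h1 h2
          injection h2 with hb h2
          subst hb
          exact congrArg₂ _ rfl (ih t t' hy hy' h1 h2)
        · simp only [sel, List.map_cons, Bool.not_true, if_false, if_true] at h1 h2
          injection h1 with hb h1
          subst hb
          exact congrArg₂ _ rfl (ih t t' hy hy' h1 h2)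

theorem c1_self_map_not (χ : List Bool) : c1 χ χ + c1 (χ.map not) (χ.map not) = χ.length := by
  induction χ with
  | nil => simp [c1_nil]
  | cons c χ ih => cases c <;> simp [c1_cons, List.map_cons] <;> omega

/-- strings of length `k` with exactly `m` ones -/
noncomputable def Scand (k m : ℕ) : List (List Bool) :=
  (allStr k).filter (fun y => y.countP (fun b => b) == m)

theorem length_Scand (k m : ℕ) : (Scand k m).length = k.choose m := by
  induction k generalizing m with
  | zero =>
    cases m with
    | zero => simp [Scand, allStr_zero]
    | succ m => simp [Scand, allStr_zero]
  | succ k ih =>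
    rw [Scand, allStr_succ, List.filter_append, List.filter_map, List.filter_map,
      List.length_append, List.length_map, List.length_map]
    cases m with
    | zero =>
      have h1 : ((allStr k).filter ((fun y => y.countP (fun b => b) == 0) ∘ List.cons false)).length
          = k.choose 0 := by
        rw [← ih 0, Scand]
        exact congrArg List.length (List.filter_congr (fun y _ => by simp [Function.comp, List.countP_cons]))
      have h2 : ((allStr k).filter ((fun y => y.countP (fun b => b) == 0) ∘ List.cons true)) = [] := by
        apply List.filter_eq_nil_iff.2; intro y _; simp [Function.comp, List.countP_cons]
      rw [h1, h2]; simp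
    | succ m =>
      have h1 : ((allStr k).filter ((fun y => y.countP (fun b => b) == m+1) ∘ List.cons false)).length
          = k.choose (m+1) := by
        rw [← ih (m+1), Scand]
        exact congrArg List.length (List.filter_congr (fun y _ => by simp [Function.comp, List.countP_cons]))
      have h2 : ((allStr k).filter ((fun y => y.countP (fun b => b) == m+1) ∘ List.cons true)).length
          = k.choose m := by
        rw [← ih m, Scand]
        exact congrArg List.length (List.filter_congr (fun y _ => by simp [Function.comp, List.countP_cons]))
      rw [h1, h2, Nat.choose_succ_succ']; omega

theorem Scand_nodup (k m : ℕ) : (Scand k m).Nodup := (allStr_nodup k).filter _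

theorem mem_Scand (k m : ℕ) (y : List Bool) :
    y ∈ Scand k m ↔ y.length = k ∧ y.countP (fun b => b) = m := by
  simp [Scand, List.mem_filter, mem_allStr]

theorem c1_le_self (χ y : List Bool) : c1 χ y ≤ c1 χ χ := by
  apply List.countP_mono_left
  intro i _ h
  rw [Bool.and_eq_true] at h
  rw [Bool.and_eq_true]
  exact ⟨h.1, h.1⟩

/-- rank of `x` in a list -/
def rankOf (l : List (List Bool)) (x : List Bool) : ℕ := l.findIdx (fun y => decide (y = x))

theorem rank_lt {l : List (List Bool)} {x : List Bool} (h : x ∈ l) : rankOf l x < l.length := by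
  induction l with
  | nil => simp at h
  | cons a t ih =>
    rw [rankOf, List.findIdx_cons]
    by_cases hax : a = x
    · simp [hax]
    · have hx : x ∈ t := by
        rcases List.mem_cons.1 h with h' | h'
        · exact absurd h'.symm hax
        · exact h'
      simpa [hax, rankOf] using ih hx

theorem rank_getD {l : List (List Bool)} {x : List Bool} (h : x ∈ l) :
    l.getD (rankOf l x) [] = x := by
  induction l with
  | nil => simp at h
  | cons a t ih =>
    rw [rankOf, List.findIdx_cons]
    by_cases hax : a = x
    · simp [hax]
    · have hx : x ∈ t := by
        rcases List.mem_cons.1 h with h' | h'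
        · exact absurd h'.symm hax
        · exact h'
      simpa [hax, rankOf] using ih hx

/-- candidate list: strings of length `χ.length` with the same `c1`-counts as `x` -/
noncomputable def candL (χ x : List Bool) : List (List Bool) :=
  (allStr χ.length).filter
    (fun y => c1 χ y == c1 χ x && c1 (χ.map not) y == c1 (χ.map not) x)

theorem mem_candL_self (χ x : List Bool) (h : x.length = χ.length) : x ∈ candL χ x := by
  simp [candL, List.mem_filter, mem_allStr, h]

theorem candL_nodup (χ x : List Bool) : (candL χ x).Nodup := (allStr_nodup _).filter _

theorem candL_length_le (χ x : List Bool) :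
    (candL χ x).length ≤
      Nat.choose (c1 χ χ) (c1 χ x) * Nat.choose (c1 (χ.map not) (χ.map not)) (c1 (χ.map not) x) := by
  classical
  set χ' := χ.map not with hχ'
  have hlen' : χ'.length = χ.length := by simp [hχ']
  rw [← List.toFinset_card_of_nodup (candL_nodup χ x)]
  rw [← length_Scand (c1 χ χ) (c1 χ x), ← length_Scand (c1 χ' χ') (c1 χ' x)]
  rw [← List.toFinset_card_of_nodup (Scand_nodup (c1 χ χ) (c1 χ x)),
    ← List.toFinset_card_of_nodup (Scand_nodup (c1 χ' χ') (c1 χ' x))]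
  rw [← Finset.card_product]
  apply Finset.card_le_card_of_injOn (fun y => (sel χ y, sel χ' y))
  · intro y hy
    rw [Finset.mem_coe, List.mem_toFinset, candL, List.mem_filter, mem_allStr] at hy
    obtain ⟨hylen, hcnt⟩ := hy
    rw [Bool.and_eq_true, beq_iff_eq, beq_iff_eq] at hcnt
    rw [Finset.mem_coe, Finset.mem_product, List.mem_toFinset, List.mem_toFinset, mem_Scand, mem_Scand]
    refine ⟨⟨sel_length χ y hylen, ?_⟩, ⟨sel_length χ' y (by rw [hylen, hlen']), ?_⟩⟩
    · rw [sel_countP χ y hylen, hcnt.1]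
    · rw [sel_countP χ' y (by rw [hylen, hlen']), hcnt.2]
  · intro y hy y' hy' heq
    simp only [List.coe_toFinset, Set.mem_setOf_eq, candL, List.mem_filter, mem_allStr] at hy hy'
    injection heq with e1 e2
    exact sel_inj χ y y' hy.1 hy'.1 e1 e2

/-- natural number encoding counts and rank of `x` relative to `χ` -/
noncomputable def encN (χ x : List Bool) : ℕ :=
  c1 χ x + (c1 χ χ + 1) *
    (c1 (χ.map not) x + (c1 (χ.map not) (χ.map not) + 1) * rankOf (candL χ x) x)

/-- the decoder: given `χ` and `N`, reconstruct the string -/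
def buildF (χ : List Bool) (N : ℕ) : List Bool :=
  let χ' := χ.map not
  let n₁ := c1 χ χ
  let n₂ := c1 χ' χ'
  let m₁ := N % (n₁ + 1)
  let N' := N / (n₁ + 1)
  let m₂ := N' % (n₂ + 1)
  let r := N' / (n₂ + 1)
  ((allStr χ.length).filter (fun y => c1 χ y == m₁ && c1 χ' y == m₂)).getD r []

theorem build_correct (χ x : List Bool) (h : x.length = χ.length) :
    buildF χ (encN χ x) = x := by
  have hm₁ : c1 χ x < c1 χ χ + 1 := Nat.lt_succ_of_le (c1_le_self χ x)
  have hm₂ : c1 (χ.map not) x < c1 (χ.map not) (χ.map not) + 1 :=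
    Nat.lt_succ_of_le (c1_le_self _ x)
  have h1 : encN χ x % (c1 χ χ + 1) = c1 χ x := by
    rw [encN, Nat.add_mul_mod_self_left, Nat.mod_eq_of_lt hm₁]
  have h2 : encN χ x / (c1 χ χ + 1)
      = c1 (χ.map not) x + (c1 (χ.map not) (χ.map not) + 1) * rankOf (candL χ x) x := by
    rw [encN, Nat.add_mul_div_left _ _ (Nat.succ_pos _), Nat.div_eq_of_lt hm₁, Nat.zero_add]
  have h3 : (c1 (χ.map not) x + (c1 (χ.map not) (χ.map not) + 1) * rankOf (candL χ x) x)
      % (c1 (χ.map not) (χ.map not) + 1) = c1 (χ.map not) x := by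
    rw [Nat.add_mul_mod_self_left, Nat.mod_eq_of_lt hm₂]
  have h4 : (c1 (χ.map not) x + (c1 (χ.map not) (χ.map not) + 1) * rankOf (candL χ x) x)
      / (c1 (χ.map not) (χ.map not) + 1) = rankOf (candL χ x) x := by
    rw [Nat.add_mul_div_left _ _ (Nat.succ_pos _), Nat.div_eq_of_lt hm₂, Nat.zero_add]
  rw [buildF]
  simp only [h1, h2, h3, h4]
  have hmem := mem_candL_self χ x h
  have hlt : rankOf (candL χ x) x < (candL χ x).length := rank_lt hmem
  rw [show ((allStr χ.length).filter
      (fun y => c1 χ y == c1 χ x && c1 (χ.map not) y == c1 (χ.map not) x)) = candL χ x from rfl]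
  exact rank_getD hmem

theorem encN_lt (χ x : List Bool) (h : x.length = χ.length) :
    encN χ x + 1 ≤ (c1 χ χ + 1) * ((c1 (χ.map not) (χ.map not) + 1) *
      (Nat.choose (c1 χ χ) (c1 χ x) *
        Nat.choose (c1 (χ.map not) (χ.map not)) (c1 (χ.map not) x))) := by
  have hm₁ : c1 χ x ≤ c1 χ χ := c1_le_self χ x
  have hm₂ : c1 (χ.map not) x ≤ c1 (χ.map not) (χ.map not) := c1_le_self _ x
  have hr : rankOf (candL χ x) x + 1 ≤ (candL χ x).length := rank_lt (mem_candL_self χ x h)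
  have hL := candL_length_le χ x
  set n₁ := c1 χ χ; set n₂ := c1 (χ.map not) (χ.map not)
  set m₁ := c1 χ x; set m₂ := c1 (χ.map not) x
  set r := rankOf (candL χ x) x
  set L := (candL χ x).length
  calc encN χ x + 1 = m₁ + 1 + (n₁ + 1) * (m₂ + (n₂ + 1) * r) := by rw [encN]; ring
    _ ≤ (n₁ + 1) + (n₁ + 1) * (m₂ + (n₂ + 1) * r) := by omega
    _ = (n₁ + 1) * (m₂ + 1 + (n₂ + 1) * r) := by ring
    _ ≤ (n₁ + 1) * ((n₂ + 1) + (n₂ + 1) * r) := by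
        apply Nat.mul_le_mul_left; omega
    _ = (n₁ + 1) * ((n₂ + 1) * (r + 1)) := by ring
    _ ≤ (n₁ + 1) * ((n₂ + 1) * (Nat.choose n₁ m₁ * Nat.choose n₂ m₂)) := by
        apply Nat.mul_le_mul_left; apply Nat.mul_le_mul_left; omega

/-- parse a self-delimiting program -/
def parseF (q : List Bool) : List Bool × ℕ :=
  let k := q.findIdx (fun b => !b)
  let rest := q.drop (k + 1)
  let l := fromBits (rest.take k)
  (((rest.drop k).take l), fromBits ((rest.drop k).drop l))

theorem findIdx_replicate (k : ℕ) (s : List Bool) :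
    (List.replicate k true ++ false :: s).findIdx (fun b => !b) = k := by
  induction k with
  | zero => simp [List.findIdx_cons]
  | succ k ih => simpa [List.replicate_succ, List.findIdx_cons] using ih

/-- the program for `x` given a program `p` for `χ` -/
noncomputable def prog (p χ x : List Bool) : List Bool :=
  List.replicate (Nat.bits p.length).length true ++
    false :: (Nat.bits p.length ++ (p ++ Nat.bits (encN χ x)))

theorem parse_prog (p χ x : List Bool) : parseF (prog p χ x) = (p, encN χ x) := by
  rw [prog, parseF]
  have h1 : (List.replicate (Nat.bits p.length).length true ++
      false :: (Nat.bits p.length ++ (p ++ Nat.bits (encN χ x)))).findIdx (fun b => !b)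
      = (Nat.bits p.length).length := findIdx_replicate _ _
  simp only [h1]
  have h2 : (List.replicate (Nat.bits p.length).length true ++
      false :: (Nat.bits p.length ++ (p ++ Nat.bits (encN χ x)))).drop
        ((Nat.bits p.length).length + 1)
      = Nat.bits p.length ++ (p ++ Nat.bits (encN χ x)) := by
    rw [show (List.replicate (Nat.bits p.length).length true ++
      false :: (Nat.bits p.length ++ (p ++ Nat.bits (encN χ x))))
      = (List.replicate (Nat.bits p.length).length true ++ [false]) ++
        (Nat.bits p.length ++ (p ++ Nat.bits (encN χ x))) by simp]
    apply List.drop_left'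
    simp
  rw [h2, List.take_left' rfl, List.drop_left' rfl, fromBits_bits,
    List.take_left' rfl, List.drop_left' rfl, fromBits_bits]

theorem length_prog (p χ x : List Bool) :
    (prog p χ x).length =
      2 * Nat.size p.length + 1 + p.length + Nat.size (encN χ x) := by
  rw [prog]
  simp [Nat.size_eq_bits_len]
  omega

/-- the combined description method -/
def D'fun (D : BStr →. BStr) : BStr →. BStr :=
  fun q => (D (parseF q).1).map (fun χ => buildF χ (parseF q).2)

theorem D'fun_spec (D : BStr →. BStr) (p χ x : List Bool) (hp : χ ∈ D p)
    (hx : x.length = χ.length) : x ∈ D'fun D (prog p χ x) := by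
  rw [D'fun, parse_prog]
  exact Part.mem_map_iff _ |>.2 ⟨χ, hp, build_correct χ x hx⟩

theorem Cw_le_length {D : BStr →. BStr} {x q : BStr} (h : x ∈ D q) :
    Cw D x ≤ (q.length : ℕ∞) :=
  iInf_le_of_le q (iInf_le _ h)

theorem toNat_le {a : ℕ∞} {m : ℕ} (h : a ≤ (m : ℕ∞)) : a.toNat ≤ m := by
  have hne : a ≠ ⊤ := ne_top_of_le_ne_top (by simp) h
  lift a to ℕ using hne
  exact_mod_cast h

theorem C_le_of_partrec {D : BStr →. BStr} (hD : OptimalDM D) {D' : BStr →. BStr}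
    (hD' : Partrec D') : ∃ c : ℕ, ∀ x q : BStr, x ∈ D' q → C D x ≤ q.length + c := by
  obtain ⟨c, hc⟩ := hD.2 D' hD'
  refine ⟨c, fun x q h => toNat_le (le_trans (hc x) ?_)⟩
  calc Cw D' x + (c : ℕ∞) ≤ (q.length : ℕ∞) + (c : ℕ∞) :=
        add_le_add_left (Cw_le_length h) _
    _ = ((q.length + c : ℕ) : ℕ∞) := by exact_mod_cast rfl

theorem C_le_length {D : BStr →. BStr} (hD : OptimalDM D) :
    ∃ c₀ : ℕ, ∀ x : BStr, C D x ≤ x.length + c₀ := by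
  have hid : Partrec (fun p : BStr => Part.some p) := Partrec.some
  obtain ⟨c, hc⟩ := C_le_of_partrec hD hid
  exact ⟨c, fun x => hc x x (Part.mem_some x)⟩

theorem Cw_ne_top {D : BStr →. BStr} {x : BStr} (h : ∃ p, x ∈ D p) : Cw D x ≠ ⊤ := by
  obtain ⟨p, hp⟩ := h
  exact ne_top_of_le_ne_top (by simp) (Cw_le_length hp)

theorem exists_opt_prog (D : BStr →. BStr) (x : BStr) (h : ∃ p, x ∈ D p) :
    ∃ p, x ∈ D p ∧ p.length = C D x := by
  classical
  obtain ⟨p₀, hp₀⟩ := h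
  have hex : ∃ k : ℕ, ∃ p, x ∈ D p ∧ p.length = k := ⟨p₀.length, p₀, hp₀, rfl⟩
  obtain ⟨p, hp, hlen⟩ := Nat.find_spec hex
  refine ⟨p, hp, ?_⟩
  have h1 : Cw D x = (Nat.find hex : ℕ∞) := by
    apply le_antisymm
    · rw [← hlen]; exact Cw_le_length hp
    · apply le_iInf₂
      intro q hq
      exact_mod_cast Nat.find_min' hex ⟨q, hq, rfl⟩
  rw [hlen, C, h1, ENat.toNat_coe]

section Computability
open Primrec

theorem list_filter' {α β : Type} [Primcodable α] [Primcodable β] {f : α → List β}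
    {p : α → β → Bool} (hf : Primrec f) (hp : Primrec₂ p) :
    Primrec fun a => (f a).filter (p a) := by
  have h : Primrec fun a => (f a).foldr (fun b r => cond (p a b) (b :: r) r) [] :=
    Primrec.list_foldr hf (const []) ((Primrec.cond (hp.comp fst (fst.comp snd))
      (list_cons.comp (fst.comp snd) (snd.comp snd))
      (snd.comp snd)).to₂)
  refine h.of_eq fun a => ?_
  induction f a with
  | nil => rfl
  | cons b l ih =>
    simp only [List.foldr_cons, ih, List.filter_cons]
    cases hb : p a b <;> simp [hb]

theorem primrec_fromBits : Primrec fromBits := by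
  have h : Primrec fun l : List Bool => l.foldr (fun b m => 2 * m + cond b 1 0) 0 :=
    Primrec.list_foldr .id (const 0)
      ((nat_add.comp (nat_mul.comp (const 2) (snd.comp snd))
        (Primrec.cond (fst.comp snd) (const 1) (const 0))).to₂)
  exact h.of_eq fun l => rfl

theorem primrec_drop : Primrec₂ fun (l : List Bool) (n : ℕ) => l.drop n := by
  have h : Primrec fun a : List Bool × ℕ =>
      Nat.rec (motive := fun _ => List Bool) a.1 (fun _ ih => List.tail ih) a.2 :=
    Primrec.nat_rec' snd fst ((list_tail.comp (snd.comp snd)).to₂)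
  refine Primrec₂.of_eq h.to₂ fun l n => ?_
  induction n with
  | zero => rfl
  | succ n ih => simp only [ih, List.tail_drop]

theorem take_eq (l : List Bool) (n : ℕ) :
    l.take n = (l.reverse.drop (l.length - n)).reverse := by
  rcases le_or_gt n l.length with h | h
  · have h2 := List.rdrop_eq_reverse_drop_reverse (l := l) (n := l.length - n)
    rw [List.rdrop, Nat.sub_sub_self h] at h2
    rw [h2]
  · rw [List.take_of_length_le h.le, Nat.sub_eq_zero_of_le h.le, List.drop_zero,
      List.reverse_reverse]

theorem primrec_take : Primrec₂ fun (l : List Bool) (n : ℕ) => l.take n := by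
  have h : Primrec fun a : List Bool × ℕ =>
      ((a.1.reverse.drop (a.1.length - a.2)).reverse) :=
    list_reverse.comp (primrec_drop.comp (list_reverse.comp fst)
      (nat_sub.comp (list_length.comp fst) snd))
  exact (h.of_eq fun a => (take_eq a.1 a.2).symm).to₂

theorem primrec_parseF : Primrec parseF := by
  have hK : Primrec fun q : List Bool => q.findIdx (fun b => !b) :=
    Primrec.list_findIdx .id ((Primrec.cond snd (const false) (const true)).to₂.of_eq
      (fun _ b => by cases b <;> rfl))
  have hR : Primrec fun q : List Bool => q.drop (q.findIdx (fun b => !b) + 1) :=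
    primrec_drop.comp .id (succ.comp hK)
  have hL : Primrec fun q : List Bool =>
      fromBits ((q.drop (q.findIdx (fun b => !b) + 1)).take (q.findIdx (fun b => !b))) :=
    primrec_fromBits.comp (primrec_take.comp hR hK)
  have hRest : Primrec fun q : List Bool =>
      (q.drop (q.findIdx (fun b => !b) + 1)).drop (q.findIdx (fun b => !b)) :=
    primrec_drop.comp hR hK
  exact ((primrec_take.comp hRest hL).pair (primrec_fromBits.comp (primrec_drop.comp hRest hL))).of_eq
    (fun q => rfl)

theorem primrec_c1 : Primrec₂ c1 := by
  have hpred : Primrec₂ fun (a : List Bool × List Bool) (i : ℕ) =>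
      (a.1.getD i false && a.2.getD i false) :=
    (Primrec.cond ((list_getD false).comp (fst.comp fst) snd)
      ((list_getD false).comp (snd.comp fst) snd) (const false)).to₂.of_eq
      (fun a i => by cases h1 : a.1.getD i false <;> simp [h1])
  have h : Primrec fun a : List Bool × List Bool =>
      ((List.range a.1.length).filter (fun i => a.1.getD i false && a.2.getD i false)).length :=
    list_length.comp (list_filter' (list_range.comp (list_length.comp fst)) hpred)
  exact (h.of_eq fun a => List.countP_eq_length_filter.symm).to₂

theorem primrec_allStr : Primrec allStr := by
  have h : Primrec fun n : ℕ => Nat.rec (motive := fun _ => List (List Bool)) [([] : List Bool)]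
      (fun _ ih => ih.map (List.cons false) ++ ih.map (List.cons true)) n :=
    Primrec.nat_rec' .id (const [([] : List Bool)])
      ((list_append.comp
        (list_map (snd.comp snd) ((list_cons.comp (const false) snd).to₂))
        (list_map (snd.comp snd) ((list_cons.comp (const true) snd).to₂))).to₂)
  exact h.of_eq fun n => rfl

theorem primrec_buildF : Primrec₂ buildF := by
  have hχ : Primrec fun a : List Bool × ℕ => a.1 := fst
  have hχ' : Primrec fun a : List Bool × ℕ => a.1.map not :=
    list_map fst ((Primrec.cond snd (const false) (const true)).to₂.of_eq
      (fun _ b => by cases b <;> rfl))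
  have hn₁ : Primrec fun a : List Bool × ℕ => c1 a.1 a.1 := primrec_c1.comp hχ hχ
  have hn₂ : Primrec fun a : List Bool × ℕ => c1 (a.1.map not) (a.1.map not) :=
    primrec_c1.comp hχ' hχ'
  have hm₁ : Primrec fun a : List Bool × ℕ => a.2 % (c1 a.1 a.1 + 1) :=
    nat_mod.comp snd (succ.comp hn₁)
  have hN' : Primrec fun a : List Bool × ℕ => a.2 / (c1 a.1 a.1 + 1) :=
    nat_div.comp snd (succ.comp hn₁)
  have hm₂ : Primrec fun a : List Bool × ℕ =>
      (a.2 / (c1 a.1 a.1 + 1)) % (c1 (a.1.map not) (a.1.map not) + 1) :=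
    nat_mod.comp hN' (succ.comp hn₂)
  have hr : Primrec fun a : List Bool × ℕ =>
      (a.2 / (c1 a.1 a.1 + 1)) / (c1 (a.1.map not) (a.1.map not) + 1) :=
    nat_div.comp hN' (succ.comp hn₂)
  have hpred : Primrec₂ fun (a : List Bool × ℕ) (y : List Bool) =>
      (c1 a.1 y == a.2 % (c1 a.1 a.1 + 1) &&
       c1 (a.1.map not) y == (a.2 / (c1 a.1 a.1 + 1)) % (c1 (a.1.map not) (a.1.map not) + 1)) := by
    have e1 : Primrec fun b : (List Bool × ℕ) × List Bool =>
        (c1 b.1.1 b.2 == b.1.2 % (c1 b.1.1 b.1.1 + 1) : Bool) :=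
      Primrec.beq.comp (primrec_c1.comp (fst.comp fst) snd) (hm₁.comp fst)
    have e2 : Primrec fun b : (List Bool × ℕ) × List Bool =>
        (c1 (b.1.1.map not) b.2 ==
          (b.1.2 / (c1 b.1.1 b.1.1 + 1)) % (c1 (b.1.1.map not) (b.1.1.map not) + 1) : Bool) :=
      Primrec.beq.comp (primrec_c1.comp (hχ'.comp fst) snd) (hm₂.comp fst)
    exact ((Primrec.cond e1 e2 (const false)).to₂.of_eq
      (fun a y => by cases h1 : (c1 a.1 y == a.2 % (c1 a.1 a.1 + 1) : Bool) <;> simp [h1]))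
  have hcand : Primrec fun a : List Bool × ℕ =>
      (allStr a.1.length).filter (fun y =>
        c1 a.1 y == a.2 % (c1 a.1 a.1 + 1) &&
        c1 (a.1.map not) y == (a.2 / (c1 a.1 a.1 + 1)) % (c1 (a.1.map not) (a.1.map not) + 1)) :=
    list_filter' (primrec_allStr.comp (list_length.comp fst)) hpred
  exact (((list_getD ([] : List Bool)).comp hcand hr).of_eq (fun a => rfl)).to₂

theorem partrec_D'fun {D : BStr →. BStr} (hD : Partrec D) : Partrec (D'fun D) := by
  have hf : Partrec fun q : BStr => D (parseF q).1 :=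
    hD.comp (fst.comp primrec_parseF).to_comp
  have hg : Computable₂ fun (q : BStr) (χ : BStr) => buildF χ (parseF q).2 :=
    (primrec_buildF.comp snd (Primrec.snd.comp (primrec_parseF.comp fst))).to_comp
  exact (hf.map hg).of_eq fun q => rfl

end Computability

theorem logb_choose_le (k m : ℕ) (hk : 0 < k) (hm : m ≤ k) :
    Real.logb 2 (k.choose m) ≤ (k : ℝ) * binH ((m : ℝ) / (k : ℝ)) := by
  have hkR : (0:ℝ) < k := by exact_mod_cast hk
  rcases Nat.eq_zero_or_pos m with rfl | hm0
  · simp [binH]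
  rcases eq_or_lt_of_le hm with rfl | hmk
  · rw [Nat.choose_self]
    have : (m:ℝ)/(m:ℝ) = 1 := div_self (by positivity)
    simp [this, binH]
  -- main case 0 < m < k
  set p : ℝ := (m : ℝ) / k with hp
  set q : ℝ := ((k - m : ℕ) : ℝ) / k with hq
  have hmR : (0:ℝ) < m := by exact_mod_cast hm0
  have hkmR : (0:ℝ) < ((k - m : ℕ) : ℝ) := by
    have : 0 < k - m := by omega
    exact_mod_cast this
  have hp0 : 0 < p := by positivity
  have hq0 : 0 < q := by positivity
  have hpq : p + q = 1 := by
    rw [hp, hq, ← add_div, div_eq_one_iff_eq (ne_of_gt hkR)]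
    push_cast [Nat.cast_sub hm]
    ring
  have hkey : (k.choose m : ℝ) * (p ^ m * q ^ (k - m)) ≤ 1 := by
    have hsum := add_pow p q k
    have hmem : m ∈ Finset.range (k + 1) := Finset.mem_range.2 (by omega)
    have hle : p ^ m * q ^ (k - m) * (k.choose m : ℝ) ≤
        ∑ i ∈ Finset.range (k + 1), p ^ i * q ^ (k - i) * (k.choose i : ℝ) := by
      apply Finset.single_le_sum (f := fun i => p ^ i * q ^ (k - i) * (k.choose i : ℝ))
      · intro i _; positivity
      · exact hmem
    calc (k.choose m : ℝ) * (p ^ m * q ^ (k - m))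
        = p ^ m * q ^ (k - m) * (k.choose m : ℝ) := by ring
      _ ≤ ∑ i ∈ Finset.range (k + 1), p ^ i * q ^ (k - i) * (k.choose i : ℝ) := hle
      _ = (p + q) ^ k := hsum.symm
      _ = 1 := by rw [hpq, one_pow]
  have hchoose_pos : (0:ℝ) < (k.choose m : ℝ) := by
    exact_mod_cast Nat.choose_pos hm
  have hlogkey : Real.logb 2 (k.choose m) + (m : ℝ) * Real.logb 2 p
      + ((k - m : ℕ) : ℝ) * Real.logb 2 q ≤ 0 := by
    have h1 : Real.logb 2 ((k.choose m : ℝ) * (p ^ m * q ^ (k - m))) ≤ 0 := by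
      apply Real.logb_nonpos (by norm_num) (by positivity) hkey
    rw [Real.logb_mul (by positivity) (by positivity),
      Real.logb_mul (by positivity) (by positivity),
      Real.logb_pow, Real.logb_pow] at h1
    linarith
  have hq1 : 1 - p = q := by linarith
  have hrhs : (k : ℝ) * binH p = -(m : ℝ) * Real.logb 2 p
      - ((k - m : ℕ) : ℝ) * Real.logb 2 q := by
    rw [binH, hq1]
    have e1 : (k : ℝ) * p = m := by rw [hp]; field_simp
    have e2 : (k : ℝ) * q = ((k - m : ℕ) : ℝ) := by rw [hq]; field_simp
    calc (k:ℝ) * (-(p * Real.logb 2 p) - q * Real.logb 2 q)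
        = -((k:ℝ) * p) * Real.logb 2 p - ((k:ℝ) * q) * Real.logb 2 q := by ring
      _ = -(m : ℝ) * Real.logb 2 p - ((k - m : ℕ) : ℝ) * Real.logb 2 q := by rw [e1, e2]
  rw [hrhs]
  linarith

theorem size_le_real (m : ℕ) : (Nat.size m : ℝ) ≤ 1 + Real.logb 2 ((m : ℝ) + 1) := by
  have h2 : (2:ℕ) ^ Nat.size m ≤ 2 * (m + 1) := by
    rcases Nat.eq_zero_or_pos m with rfl | hm
    · simp
    · have hs : 0 < Nat.size m := Nat.size_pos.2 hm
      have h1 : 2 ^ (Nat.size m - 1) ≤ m := Nat.lt_size.1 (by omega)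
      calc (2:ℕ) ^ Nat.size m = 2 * 2 ^ (Nat.size m - 1) := by
            rw [← pow_succ']; congr 1; omega
        _ ≤ 2 * m := by omega
        _ ≤ 2 * (m + 1) := by omega
  have h2R : ((2:ℝ) ^ Nat.size m) ≤ 2 * ((m : ℝ) + 1) := by exact_mod_cast h2
  calc (Nat.size m : ℝ) = Real.logb 2 ((2:ℝ) ^ Nat.size m) := by
        rw [Real.logb_pow, Real.logb_self_eq_one (by norm_num)]; ring
    _ ≤ Real.logb 2 (2 * ((m : ℝ) + 1)) := by
        apply Real.logb_le_logb_of_le (by norm_num : (1:ℝ) < 2) (by positivity) h2R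
    _ = 1 + Real.logb 2 ((m : ℝ) + 1) := by
        rw [Real.logb_mul (by norm_num) (by positivity),
          Real.logb_self_eq_one (by norm_num)]

open scoped Classical in
theorem countP_range_sum (p : ℕ → Bool) (n : ℕ) :
    (List.range n).countP p = ∑ i ∈ Finset.range n, if p i then 1 else 0 := by
  induction n with
  | zero => simp
  | succ n ih =>
    rw [List.range_succ, List.countP_append, Finset.sum_range_succ, ih]
    simp [List.countP_cons]

open scoped Classical in
theorem countP_range_eq_card {n : ℕ} (p : ℕ → Bool) (Q : Fin n → Prop)
    (h : ∀ i : Fin n, Q i ↔ p i = true) :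
    (List.range n).countP p = (Finset.univ.filter Q).card := by
  rw [countP_range_sum, Finset.card_filter,
    ← Fin.sum_univ_eq_sum_range (fun i => if p i then 1 else 0) n]
  apply Finset.sum_congr rfl
  intro i _
  by_cases hq : Q i
  · rw [if_pos hq, if_pos ((h i).1 hq)]
  · rw [if_neg hq, if_neg (fun hp => hq ((h i).2 hp))]

theorem getD_ofFn {n : ℕ} (f : Fin n → Bool) (i : Fin n) :
    (List.ofFn f).getD (i : ℕ) false = f i := by
  have h : (i : ℕ) < (List.ofFn f).length := by simp [i.isLt]
  rw [List.getD_eq_getElem _ _ h]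
  simp

open scoped Classical in
theorem c1_ofFn_self {n : ℕ} (A : Finset (Fin n)) :
    c1 (List.ofFn fun i : Fin n => decide (i ∈ A)) (List.ofFn fun i : Fin n => decide (i ∈ A))
      = A.card := by
  rw [c1, List.length_ofFn,
    countP_range_eq_card _ (fun i : Fin n => i ∈ A)
      (fun i => by simp [getD_ofFn (fun j : Fin n => decide (j ∈ A)) i])]
  apply congrArg Finset.card
  ext i; simp

open scoped Classical in
theorem c1_ofFn {n : ℕ} (A : Finset (Fin n)) (x : List Bool) :
    c1 (List.ofFn fun i : Fin n => decide (i ∈ A)) x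
      = (A.filter (fun i => x.getD (i : ℕ) false = true)).card := by
  rw [c1, List.length_ofFn,
    countP_range_eq_card _ (fun i : Fin n => i ∈ A ∧ x.getD (i : ℕ) false = true)
      (fun i => by simp [getD_ofFn (fun j : Fin n => decide (j ∈ A)) i])]
  have h1 : (do let a ← A; pure ((a : Fin n) : ℕ) : Finset ℕ) = A.image Fin.val := by
    ext j; simp
  rw [h1, Finset.filter_image, Finset.card_image_of_injective _ Fin.val_injective]
  apply congrArg Finset.card
  ext i; simp

theorem map_not_ofFn {n : ℕ} (A : Finset (Fin n)) :
    (List.ofFn fun i : Fin n => decide (i ∈ A)).map not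
      = List.ofFn fun i : Fin n => decide (i ∈ Aᶜ) := by
  rw [List.map_ofFn]
  congr 1
  funext i
  simp [Function.comp, Finset.mem_compl]

theorem Cw_ne_top_of_opt {D : BStr →. BStr} (hD : OptimalDM D) (x : BStr) : Cw D x ≠ ⊤ := by
  obtain ⟨c, hc⟩ := hD.2 (fun p => Part.some p) Partrec.some
  have h1 : Cw (fun p : BStr => Part.some p) x ≤ (x.length : ℕ∞) :=
    Cw_le_length (Part.mem_some x)
  have h2 : Cw D x ≤ ((x.length + c : ℕ) : ℕ∞) := by
    refine le_trans (hc x) ?_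
    calc Cw (fun p : BStr => Part.some p) x + (c:ℕ∞) ≤ (x.length : ℕ∞) + (c:ℕ∞) :=
          add_le_add_left h1 _
      _ = ((x.length + c : ℕ) : ℕ∞) := by exact_mod_cast rfl
  exact ne_top_of_le_ne_top (ENat.coe_ne_top _) h2

theorem exists_prog_of_opt {D : BStr →. BStr} (hD : OptimalDM D) (x : BStr) :
    ∃ p, x ∈ D p := by
  by_contra h
  push_neg at h
  apply Cw_ne_top_of_opt hD x
  rw [Cw]
  have h1 : ∀ p : BStr, (⨅ (_ : x ∈ D p), ((p.length : ℕ∞))) = ⊤ :=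
    fun p => iInf_neg (h p)
  simp [h1]


/-- **Kolmogorov's 1982 seminar bound** underlying frequency stability of
stochastic sequences under simple selections. Positions are indexed by
`Fin n`; `χ_A` is the characteristic string of the selection `A`. -/
theorem stmt18 (D : BStr →. BStr) (hD : OptimalDM D) :
    ∃ c : ℝ, ∀ n : ℕ, ∀ A : Finset (Fin n), 0 < A.card → A.card < n →
      ∀ x : BStr, x.length = n →
      (C D x : ℝ) ≤
        (A.card : ℝ) *
            binH (((A.filter (fun i => x.getD (i : ℕ) false = true)).card : ℝ)
              / (A.card : ℝ))
        + ((n - A.card : ℕ) : ℝ) *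
            binH (((Aᶜ.filter (fun i => x.getD (i : ℕ) false = true)).card : ℝ)
              / ((n - A.card : ℕ) : ℝ))
        + (C D (List.ofFn (fun i : Fin n => decide (i ∈ A))) : ℝ)
        + c * Real.logb 2 ((n : ℝ) + 2) := by
  obtain ⟨c₀, hc₀⟩ := C_le_length hD
  obtain ⟨c₁, hc₁⟩ := C_le_of_partrec hD (partrec_D'fun hD.1)
  refine ⟨(c₁ : ℝ) + 2 * Real.logb 2 ((c₀ : ℝ) + 1) + 8, ?_⟩
  intro n A hA0 hAn x hxlen
  set χ : List Bool := List.ofFn (fun i : Fin n => decide (i ∈ A)) with hχ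
  have hχlen : χ.length = n := by simp [hχ]
  have hxχ : x.length = χ.length := by rw [hxlen, hχlen]
  obtain ⟨p, hpχ, hplen⟩ := exists_opt_prog D χ (exists_prog_of_opt hD χ)
  have hxmem : x ∈ D'fun D (prog p χ x) := D'fun_spec D p χ x hpχ hxχ
  have hkey : C D x ≤ 2 * Nat.size p.length + 1 + p.length + Nat.size (encN χ x) + c₁ := by
    have := hc₁ x _ hxmem
    rwa [length_prog] at this
  have hmapnot : χ.map not = List.ofFn (fun i : Fin n => decide (i ∈ Aᶜ)) := map_not_ofFn A
  have e₁ : c1 χ χ = A.card := c1_ofFn_self A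
  have e₂ : c1 χ x = (A.filter (fun i => x.getD (i : ℕ) false = true)).card := c1_ofFn A x
  have e₃ : c1 (χ.map not) (χ.map not) = Aᶜ.card := by rw [hmapnot]; exact c1_ofFn_self Aᶜ
  have e₄ : c1 (χ.map not) x = (Aᶜ.filter (fun i => x.getD (i : ℕ) false = true)).card := by
    rw [hmapnot]; exact c1_ofFn Aᶜ x
  have hAc : Aᶜ.card = n - A.card := by rw [Finset.card_compl, Fintype.card_fin]
  set n₁ := A.card with hn₁
  set m₁ := (A.filter (fun i => x.getD (i : ℕ) false = true)).card with hm₁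
  set m₂ := (Aᶜ.filter (fun i => x.getD (i : ℕ) false = true)).card with hm₂
  have hn₂pos : 0 < n - n₁ := by omega
  have hn2 : 2 ≤ n := by omega
  have hm₁le : m₁ ≤ n₁ := by rw [← e₂, ← e₁]; exact c1_le_self χ x
  have hm₂le : m₂ ≤ n - n₁ := by rw [← e₄, ← hAc, ← e₃]; exact c1_le_self _ x
  have hN := encN_lt χ x hxχ
  rw [e₁, e₂, e₃, e₄, hAc] at hN
  have hNn : encN χ x + 1 ≤ (n + 2) * ((n + 2) * (n₁.choose m₁ * (n - n₁).choose m₂)) := by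
    refine le_trans hN (Nat.mul_le_mul (by omega) (Nat.mul_le_mul (by omega) le_rfl))
  have hL : p.length ≤ n + c₀ := by
    rw [hplen]
    calc C D χ ≤ χ.length + c₀ := hc₀ χ
      _ = n + c₀ := by rw [hχlen]
  have hB₁pos : 0 < n₁.choose m₁ := Nat.choose_pos hm₁le
  have hB₂pos : 0 < (n - n₁).choose m₂ := Nat.choose_pos hm₂le
  have hB₁posR : (0:ℝ) < (n₁.choose m₁ : ℝ) := by exact_mod_cast hB₁pos
  have hB₂posR : (0:ℝ) < ((n - n₁).choose m₂ : ℝ) := by exact_mod_cast hB₂pos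
  have F2 : (Nat.size p.length : ℝ) ≤ 1 + Real.logb 2 ((p.length : ℝ) + 1) := size_le_real _
  have F3 : Real.logb 2 ((p.length : ℝ) + 1)
      ≤ Real.logb 2 ((c₀ : ℝ) + 1) + Real.logb 2 ((n : ℝ) + 2) := by
    have hle : ((p.length : ℝ) + 1) ≤ ((c₀ : ℝ) + 1) * ((n : ℝ) + 2) := by
      have h1 : (p.length : ℝ) ≤ (n : ℝ) + (c₀ : ℝ) := by exact_mod_cast hL
      have h2 : (0:ℝ) ≤ (c₀ : ℝ) := by positivity
      have h3 : (0:ℝ) ≤ (n : ℝ) := by positivity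
      nlinarith
    calc Real.logb 2 ((p.length : ℝ) + 1) ≤ Real.logb 2 (((c₀ : ℝ) + 1) * ((n : ℝ) + 2)) :=
          Real.logb_le_logb_of_le (by norm_num) (by positivity) hle
      _ = Real.logb 2 ((c₀ : ℝ) + 1) + Real.logb 2 ((n : ℝ) + 2) :=
          Real.logb_mul (by positivity) (by positivity)
  have F4 : (Nat.size (encN χ x) : ℝ) ≤ 1 + Real.logb 2 ((encN χ x : ℝ) + 1) := size_le_real _
  have F5 : Real.logb 2 ((encN χ x : ℝ) + 1)
      ≤ Real.logb 2 ((n : ℝ) + 2) + (Real.logb 2 ((n : ℝ) + 2) +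
        (Real.logb 2 (n₁.choose m₁ : ℝ) + Real.logb 2 ((n - n₁).choose m₂ : ℝ))) := by
    have hle : ((encN χ x : ℝ) + 1)
        ≤ ((n : ℝ) + 2) * (((n : ℝ) + 2) * ((n₁.choose m₁ : ℝ) * ((n - n₁).choose m₂ : ℝ))) := by
      exact_mod_cast hNn
    calc Real.logb 2 ((encN χ x : ℝ) + 1)
        ≤ Real.logb 2 (((n : ℝ) + 2) * (((n : ℝ) + 2) *
            ((n₁.choose m₁ : ℝ) * ((n - n₁).choose m₂ : ℝ)))) :=
          Real.logb_le_logb_of_le (by norm_num) (by positivity) hle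
      _ = _ := by
          rw [Real.logb_mul (by positivity) (by positivity),
            Real.logb_mul (by positivity) (by positivity),
            Real.logb_mul (by positivity) (by positivity)]
  have F6 : Real.logb 2 (n₁.choose m₁ : ℝ) ≤ (n₁ : ℝ) * binH ((m₁ : ℝ) / (n₁ : ℝ)) :=
    logb_choose_le n₁ m₁ hA0 hm₁le
  have F7 : Real.logb 2 ((n - n₁).choose m₂ : ℝ)
      ≤ ((n - n₁ : ℕ) : ℝ) * binH ((m₂ : ℝ) / ((n - n₁ : ℕ) : ℝ)) :=
    logb_choose_le (n - n₁) m₂ hn₂pos hm₂le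
  have F9 : (1:ℝ) ≤ Real.logb 2 ((n : ℝ) + 2) := by
    rw [← Real.logb_self_eq_one (b := 2) (by norm_num)]
    have h0 : (0:ℝ) ≤ (n : ℝ) := Nat.cast_nonneg n
    exact Real.logb_le_logb_of_le (by norm_num) (by norm_num) (by linarith)
  have F10 : (0:ℝ) ≤ Real.logb 2 ((c₀ : ℝ) + 1) := by
    have h0 : (0:ℝ) ≤ (c₀ : ℝ) := Nat.cast_nonneg c₀
    exact Real.logb_nonneg (by norm_num) (by linarith)
  have hc₁R : (0:ℝ) ≤ (c₁ : ℝ) := by positivity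
  have hkeyR : (C D x : ℝ) ≤ 2 * (Nat.size p.length : ℝ) + 1 + (p.length : ℝ)
      + (Nat.size (encN χ x) : ℝ) + (c₁ : ℝ) := by exact_mod_cast hkey
  have hplenR : (p.length : ℝ) = (C D χ : ℝ) := by exact_mod_cast hplen
  have hstep2 : (0:ℝ) ≤ ((c₁ : ℝ) + 2 * Real.logb 2 ((c₀ : ℝ) + 1) + 4)
      * (Real.logb 2 ((n : ℝ) + 2) - 1) := by
    apply mul_nonneg
    · linarith
    · linarith
  linarith [hkeyR, F2, F3, F4, F5, F6, F7, F9, F10, hstep2, hplenR]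
end
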